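/- Let $R>0$, $x_0 \in \mathbb{R}^2$ with $0 < a := |x_0| < R$, and suppose $0 < \beta \leq (R-a)/(R(R+a))$. Set $\alpha^2 = R^2 - a^2$ and $\varphi(x) = (|x-x_0|^2+\alpha^2)^{-\beta R}$. Then $-\Delta \varphi(x) \geq 0$ for all $x \in \overline{B_R}$. -/

import Mathlib

open Real

noncomputable def lap (f : EuclideanSpace ℝ (Fin 2) → ℝ)
    (x : EuclideanSpace ℝ (Fin 2)) : ℝ :=
  ∑ i : Fin 2, fderiv ℝ (fun y => fderiv ℝ f y (EuclideanSpace.single i 1)) x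
    (EuclideanSpace.single i 1)

/-! For `φ = u ^ p` with `u = ‖x - x₀‖ ^ 2 + c`, a direct computation in the plane gives
`Δφ = 4 p u ^ (p - 2) (p ‖x - x₀‖ ^ 2 + c)`. With `p = -βR` and `c = R² - a²`, the sign of `-Δφ`
is that of `c - βR ‖x - x₀‖²`, which is nonnegative on the closed ball because
`‖x - x₀‖ ≤ R + a` and `βR (R + a) ≤ R - a`. -/

open scoped RealInnerProductSpace

theorem mul_norm_sub_sq_le_of_mem_closedBall {E : Type*} [SeminormedAddCommGroup E]
    {R β : ℝ} {x x₀ : E}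
    (hx : x ∈ Metric.closedBall 0 R) (hR : ‖x₀‖ < R) (hβ : 0 ≤ β)
    (hβa : β ≤ (R - ‖x₀‖) / (R * (R + ‖x₀‖))) :
    β * R * ‖x - x₀‖ ^ 2 ≤ R ^ 2 - ‖x₀‖ ^ 2 := by
  have hR₀ : 0 < R := (norm_nonneg x₀).trans_lt hR
  have hRa : 0 < R + ‖x₀‖ := by positivity
  have hdist : ‖x - x₀‖ ≤ R + ‖x₀‖ :=
    (norm_sub_le x x₀).trans (by simpa using add_le_add_right (mem_closedBall_zero_iff.mp hx) ‖x₀‖)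
  have hβR : β * R * (R + ‖x₀‖) ≤ R - ‖x₀‖ := by
    rwa [le_div_iff₀ (by positivity), ← mul_assoc] at hβa
  calc β * R * ‖x - x₀‖ ^ 2 ≤ β * R * (R + ‖x₀‖) ^ 2 := by gcongr
    _ = β * R * (R + ‖x₀‖) * (R + ‖x₀‖) := by ring
    _ ≤ (R - ‖x₀‖) * (R + ‖x₀‖) := by gcongr
    _ = R ^ 2 - ‖x₀‖ ^ 2 := by ring

section InnerProductSpace

variable {E : Type*} [NormedAddCommGroup E] [InnerProductSpace ℝ E] {x₀ : E} {c : ℝ}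

theorem hasFDerivAt_rpow_norm_sub_sq_add (hc : 0 < c) (p : ℝ) (y : E) :
    HasFDerivAt (fun z => (‖z - x₀‖ ^ 2 + c) ^ p)
      ((2 * p * (‖y - x₀‖ ^ 2 + c) ^ (p - 1)) • innerSL ℝ (y - x₀)) y := by
  have hu : 0 < ‖y - x₀‖ ^ 2 + c := by positivity
  have h := ((((hasFDerivAt_id y).sub_const x₀).norm_sq).add_const c).rpow_const
    (p := p) (Or.inl hu.ne')
  refine h.congr_fderiv ?_
  ext v
  simp only [id_eq, map_sub, ContinuousLinearMap.comp_id, smul_apply, sub_apply, coe_innerSL_apply,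
    nsmul_eq_mul, Nat.cast_ofNat, smul_eq_mul]
  ring

theorem fderiv_rpow_norm_sub_sq_add_apply (hc : 0 < c) (p : ℝ) (y v : E) :
    fderiv ℝ (fun z => (‖z - x₀‖ ^ 2 + c) ^ p) y v =
      2 * p * (‖y - x₀‖ ^ 2 + c) ^ (p - 1) * ⟪y - x₀, v⟫ := by
  rw [(hasFDerivAt_rpow_norm_sub_sq_add hc p y).fderiv]
  simp only [smul_apply, innerSL_apply_apply, smul_eq_mul]

theorem fderiv_fderiv_rpow_norm_sub_sq_add_apply (hc : 0 < c) (p : ℝ) (x v : E) :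
    fderiv ℝ (fun y => fderiv ℝ (fun z => (‖z - x₀‖ ^ 2 + c) ^ p) y v) x v =
      4 * p * (p - 1) * (‖x - x₀‖ ^ 2 + c) ^ (p - 2) * ⟪x - x₀, v⟫ ^ 2
        + 2 * p * (‖x - x₀‖ ^ 2 + c) ^ (p - 1) * ‖v‖ ^ 2 := by
  have hcoeff := (hasFDerivAt_rpow_norm_sub_sq_add (x₀ := x₀) hc (p - 1) x).const_mul (2 * p)
  have hinner : HasFDerivAt (fun y => ⟪y - x₀, v⟫) (innerSL ℝ v) x := by
    have h := (innerSL ℝ v).hasFDerivAt.comp x ((hasFDerivAt_id x).sub_const x₀)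
    simpa [Function.comp_def, real_inner_comm v] using h
  simp_rw [fderiv_rpow_norm_sub_sq_add_apply hc]
  rw [(hcoeff.fun_mul hinner).fderiv]
  simp only [add_apply, smul_apply, innerSL_apply_apply, smul_eq_mul,
    real_inner_self_eq_norm_sq, real_inner_comm v]
  rw [show p - 1 - 1 = p - 2 by ring]
  ring

end InnerProductSpace

theorem lap_rpow_norm_sub_sq_add {x₀ : EuclideanSpace ℝ (Fin 2)} {c : ℝ} (hc : 0 < c) (p : ℝ)
    (x : EuclideanSpace ℝ (Fin 2)) :
    lap (fun z => (‖z - x₀‖ ^ 2 + c) ^ p) x =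
      4 * p * (‖x - x₀‖ ^ 2 + c) ^ (p - 2) * (p * ‖x - x₀‖ ^ 2 + c) := by
  have hu : 0 < ‖x - x₀‖ ^ 2 + c := by positivity
  have hpow : (‖x - x₀‖ ^ 2 + c) ^ (p - 1) =
      (‖x - x₀‖ ^ 2 + c) ^ (p - 2) * (‖x - x₀‖ ^ 2 + c) := by
    rw [← rpow_add_one hu.ne']
    ring_nf
  simp only [lap, fderiv_fderiv_rpow_norm_sub_sq_add_apply hc, EuclideanSpace.inner_single_right,
    PiLp.norm_single, Fin.sum_univ_two]
  rw [hpow, EuclideanSpace.real_norm_sq_eq (x - x₀), Fin.sum_univ_two]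
  simp only [PiLp.sub_apply, ringHom_apply, one_mul, norm_one, one_pow, mul_one]
  ring

theorem stmt_4_general (R β a : ℝ) (hβ : 0 < β)
    (x₀ : EuclideanSpace ℝ (Fin 2)) (ha : a = ‖x₀‖) (haR : a < R)
    (hβa : β ≤ (R - a) / (R * (R + a)))
    (φ : EuclideanSpace ℝ (Fin 2) → ℝ)
    (hφ : ∀ x, φ x = (‖x - x₀‖ ^ 2 + (R ^ 2 - a ^ 2)) ^ (-(β * R))) :
    ∀ x ∈ Metric.closedBall (0 : EuclideanSpace ℝ (Fin 2)) R, 0 ≤ -lap φ x := by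
  intro x hx
  subst ha
  have hR : 0 < R := (norm_nonneg x₀).trans_lt haR
  have hc : 0 < R ^ 2 - ‖x₀‖ ^ 2 := by nlinarith [norm_nonneg x₀]
  have hbound := mul_norm_sub_sq_le_of_mem_closedBall hx haR hβ.le hβa
  have hu := rpow_nonneg (by positivity : 0 ≤ ‖x - x₀‖ ^ 2 + (R ^ 2 - ‖x₀‖ ^ 2)) (-(β * R) - 2)
  rw [funext hφ, lap_rpow_norm_sub_sq_add hc]
  linarith [mul_nonneg (mul_nonneg (mul_nonneg hβ.le hR.le) hu) (sub_nonneg.mpr hbound)]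

theorem stmt_4 (R β a : ℝ) (hR : 0 < R) (hβ : 0 < β)
    (x₀ : EuclideanSpace ℝ (Fin 2)) (ha : a = ‖x₀‖) (ha0 : 0 < a) (haR : a < R)
    (hβa : β ≤ (R - a) / (R * (R + a)))
    (φ : EuclideanSpace ℝ (Fin 2) → ℝ)
    (hφ : ∀ x, φ x = (‖x - x₀‖ ^ 2 + (R ^ 2 - a ^ 2)) ^ (-(β * R))) :
    ∀ x ∈ Metric.closedBall (0 : EuclideanSpace ℝ (Fin 2)) R, 0 ≤ -lap φ x :=
  stmt_4_general R β a hβ x₀ ha haR hβa φ hφ
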